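/- arXiv:2210.11027 — 3 statements merged into one kernel-verified Lean document; each statement's English description precedes it below -/
import Mathlib

section
/- Let X be a compact topological space, K ⊆ X a closed subset, and (H_i)_{i∈ℕ} a pointwise nondecreasing sequence of continuous functions H_i : X → ℝ such that H_i(x) → 0 for every x ∈ K and H_i(x) → ∞ for every x ∉ K. If H : X → ℝ is continuous with H(x) < 0 for all x ∈ K, then there exists N such that for all i ≥ N and all x ∈ X one has H(x) < H_i(x). -/
/-- Domination property: a pointwise nondecreasing sequence of continuous functions on a
compact space, converging to `0` on the closed set `K` and to `+∞` off `K`, eventually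
strictly dominates any continuous function which is negative on `K`. -/
theorem stmt_0 {X : Type*} [TopologicalSpace X] [CompactSpace X]
    (K : Set X) (hK : IsClosed K) (Hs : ℕ → X → ℝ)
    (hcont : ∀ i, Continuous (Hs i))
    (hmono : ∀ i x, Hs i x ≤ Hs (i + 1) x)
    (hK0 : ∀ x ∈ K, Filter.Tendsto (fun i => Hs i x) Filter.atTop (nhds 0))
    (hKinf : ∀ x ∉ K, Filter.Tendsto (fun i => Hs i x) Filter.atTop Filter.atTop)
    (H : X → ℝ) (hH : Continuous H) (hHneg : ∀ x ∈ K, H x < 0) :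
    ∃ N : ℕ, ∀ i ≥ N, ∀ x : X, H x < Hs i x := by
  have hmono' : ∀ x, Monotone fun i => Hs i x := fun x =>
    monotone_nat_of_le_succ fun i => hmono i x
  set U : ℕ → Set X := fun i => {x | H x < Hs i x} with hU
  have hopen : ∀ i, IsOpen (U i) := fun i =>
    isOpen_lt hH (hcont i)
  have hcover : Set.univ ⊆ ⋃ i, U i := by
    intro x _
    simp only [Set.mem_iUnion]
    by_cases hx : x ∈ K
    · have : ∀ᶠ i in Filter.atTop, H x < Hs i x :=
        (hK0 x hx).eventually_const_lt (hHneg x hx)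
      exact this.exists
    · have : ∀ᶠ i in Filter.atTop, H x < Hs i x :=
        (hKinf x hx).eventually_gt_atTop (H x)
      exact this.exists
  obtain ⟨t, ht⟩ := isCompact_univ.elim_finite_subcover U hopen hcover
  refine ⟨t.sup id, fun i hi x => ?_⟩
  obtain ⟨j, hj, hxj⟩ := Set.mem_iUnion₂.mp (ht (Set.mem_univ x))
  have hji : j ≤ i := le_trans (Finset.le_sup (f := id) hj) hi
  exact lt_of_lt_of_le hxj (hmono' x hji)
end

section
/- Let R be a ring of finite left global dimension. Then every acyclic (i.e. exact) ℤ-graded chain complex of projective left R-modules is contractible (null-homotopic, i.e. the identity map is chain homotopic to zero). -/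
open CategoryTheory CategoryTheory.Limits

universe u

section PD

variable {R : Type u} [Ring R]

/-- Projective dimension at most `m`, phrased via syzygies. -/
def pdLE (R : Type u) [Ring R] : ℕ → ∀ (M : Type u) [AddCommGroup M] [Module R M], Prop
  | 0, M, _, _ => Module.Projective R M
  | (m+1), M, _, _ => ∃ (P : Type u) (_ : AddCommGroup P) (_ : Module R P) (f : P →ₗ[R] M),
      Function.Surjective f ∧ Module.Projective R P ∧ pdLE R m (LinearMap.ker f)

theorem pdLE_congr {m : ℕ} {P : Type u} [AddCommGroup P] [Module R P]
    {p q : Submodule R P} (h : p = q) (hp : pdLE R m p) : pdLE R m q := by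
  subst h; exact hp

theorem Module.projective_of_subsingleton (M : Type u) [AddCommGroup M] [Module R M]
    [Subsingleton M] : Module.Projective R M :=
  Module.Projective.of_split (0 : M →ₗ[R] R) 0 (LinearMap.ext fun x => Subsingleton.elim _ _)

theorem pdLE_of_equiv (m : ℕ) :
    ∀ (M N : Type u) [AddCommGroup M] [Module R M] [AddCommGroup N] [Module R N],
      (M ≃ₗ[R] N) → pdLE R m M → pdLE R m N := by
  induction m with
  | zero =>
    intro M N _ _ _ _ e h
    have h' : Module.Projective R M := h
    exact Module.Projective.of_equiv e
  | succ m ih =>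
    intro M N _ _ _ _ e h
    obtain ⟨P, _, _, f, hf, hP, hker⟩ := h
    refine ⟨P, ‹_›, ‹_›, e.toLinearMap ∘ₗ f, ?_, hP, ?_⟩
    · exact e.surjective.comp hf
    · exact pdLE_congr (LinearEquiv.ker_comp (e'' := e) f).symm hker

/-- Split exact sequence: if `π` has a linear section then `X ≃ ker π × Q`. -/
noncomputable def splitEquiv {X Q : Type u} [AddCommGroup X] [Module R X]
    [AddCommGroup Q] [Module R Q] (π : X →ₗ[R] Q) (s : Q →ₗ[R] X)
    (hs : ∀ q, π (s q) = q) : (LinearMap.ker π × Q) ≃ₗ[R] X where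
  toFun kq := kq.1.val + s kq.2
  map_add' := by intro a b; simp [add_add_add_comm]
  map_smul' := by intro r a; simp [smul_add]
  invFun x := (⟨x - s (π x), by simp [hs]⟩, π x)
  left_inv := by
    rintro ⟨⟨k, hk⟩, q⟩
    have hk' : π k = 0 := hk
    ext <;> simp [hk', hs]
  right_inv := by
    intro x
    simp

end PD
section PD2
variable {R : Type u} [Ring R]
variable {A M P Q : Type u} [AddCommGroup A] [Module R A] [AddCommGroup M] [Module R M]
  [AddCommGroup P] [Module R P] [AddCommGroup Q] [Module R Q]

/-- One half of Schanuel: the fibre product is `ker f × Q`. -/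
theorem schanuelAux (f : P →ₗ[R] M) (g : Q →ₗ[R] M) (hf : Function.Surjective f)
    (hQ : Module.Projective R Q) :
    Nonempty ((LinearMap.ker f × Q) ≃ₗ[R]
      LinearMap.ker ((f ∘ₗ LinearMap.fst R P Q) - (g ∘ₗ LinearMap.snd R P Q))) := by
  set X := LinearMap.ker ((f ∘ₗ LinearMap.fst R P Q) - (g ∘ₗ LinearMap.snd R P Q)) with hX
  have memX : ∀ x : P × Q, x ∈ X ↔ f x.1 = g x.2 := by
    intro x
    simp [hX, LinearMap.mem_ker, sub_eq_zero]
  let π : X →ₗ[R] Q := (LinearMap.snd R P Q) ∘ₗ X.subtype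
  -- a section of π
  obtain ⟨h, hh⟩ := Module.projective_lifting_property (R := R) f g hf
  let s : Q →ₗ[R] X := LinearMap.codRestrict X ((h.prod LinearMap.id)) (by
    intro q
    rw [memX]
    exact congrFun (congrArg (fun t => t.toFun) hh) q)
  have hs : ∀ q, π (s q) = q := fun q => rfl
  -- ker π ≃ ker f
  let e : LinearMap.ker π ≃ₗ[R] LinearMap.ker f :=
    { toFun := fun z => ⟨z.val.val.1, by
        have h1 : f z.val.val.1 = g z.val.val.2 := (memX _).1 z.val.property
        have h2 : z.val.val.2 = 0 := z.property
        rw [LinearMap.mem_ker, h1, h2, map_zero]⟩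
      map_add' := fun a b => rfl
      map_smul' := fun r a => rfl
      invFun := fun k => ⟨⟨(k.val, 0), by rw [memX]; simp [k.property]⟩, by
        simp [π, LinearMap.mem_ker]⟩
      left_inv := by
        rintro ⟨⟨⟨p, q⟩, hpq⟩, hz⟩
        have : q = 0 := hz
        subst this
        rfl
      right_inv := fun k => rfl }
  exact ⟨(e.symm.prodCongr (LinearEquiv.refl R Q)).trans (splitEquiv π s hs)⟩

theorem schanuel (f : P →ₗ[R] M) (g : Q →ₗ[R] M) (hf : Function.Surjective f)
    (hg : Function.Surjective g) (hP : Module.Projective R P) (hQ : Module.Projective R Q) :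
    Nonempty ((LinearMap.ker f × Q) ≃ₗ[R] (LinearMap.ker g × P)) := by
  obtain ⟨e₁⟩ := schanuelAux f g hf hQ
  obtain ⟨e₂⟩ := schanuelAux g f hg hP
  -- swap equivalence between the two fibre products
  let eswap : (LinearMap.ker ((f ∘ₗ LinearMap.fst R P Q) - (g ∘ₗ LinearMap.snd R P Q)))
      ≃ₗ[R] (LinearMap.ker ((g ∘ₗ LinearMap.fst R Q P) - (f ∘ₗ LinearMap.snd R Q P))) :=
    { toFun := fun z => ⟨(z.val.2, z.val.1), by
        have := z.property
        simp only [LinearMap.mem_ker, LinearMap.sub_apply, LinearMap.comp_apply,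
          LinearMap.fst_apply, LinearMap.snd_apply, sub_eq_zero] at this ⊢
        exact this.symm⟩
      map_add' := fun a b => rfl
      map_smul' := fun r a => rfl
      invFun := fun z => ⟨(z.val.2, z.val.1), by
        have := z.property
        simp only [LinearMap.mem_ker, LinearMap.sub_apply, LinearMap.comp_apply,
          LinearMap.fst_apply, LinearMap.snd_apply, sub_eq_zero] at this ⊢
        exact this.symm⟩
      left_inv := fun z => rfl
      right_inv := fun z => rfl }
  exact ⟨(e₁.trans eswap).trans e₂.symm⟩

theorem pdLE_prod (m : ℕ) :
    ∀ (A Q : Type u) [AddCommGroup A] [Module R A] [AddCommGroup Q] [Module R Q],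
      pdLE R m A → Module.Projective R Q → pdLE R m (A × Q) := by
  induction m with
  | zero =>
    intro A Q _ _ _ _ hA hQ
    have hA' : Module.Projective R A := hA
    show Module.Projective R (A × Q)
    infer_instance
  | succ m ih =>
    intro A Q _ _ _ _ hA hQ
    obtain ⟨P, _, _, f, hf, hP, hker⟩ := hA
    refine ⟨P × Q, inferInstance, inferInstance, f.prodMap LinearMap.id, ?_, ?_, ?_⟩
    · exact hf.prodMap Function.surjective_id
    · have := hP; infer_instance
    · -- ker (f.prodMap id) ≃ ker f
      refine pdLE_of_equiv m _ _ ?_ hker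
      exact
        { toFun := fun k => ⟨(k.val, 0), by
            simp [LinearMap.mem_ker, Prod.ext_iff, k.property]⟩
          map_add' := fun a b => by ext <;> simp
          map_smul' := fun r a => by ext <;> simp
          invFun := fun z => ⟨z.val.1, by
            have := z.property
            simp only [LinearMap.mem_ker, LinearMap.prodMap_apply, LinearMap.id_apply,
              Prod.ext_iff] at this
            exact this.1⟩
          left_inv := fun k => rfl
          right_inv := fun z => by
            have := z.property
            simp only [LinearMap.mem_ker, LinearMap.prodMap_apply, LinearMap.id_apply,
              Prod.ext_iff] at this
            ext
            · rfl
            · exact this.2.symm }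

theorem pdLE_of_prod {m : ℕ} (hAQ : pdLE R m (A × Q)) (hQ : Module.Projective R Q) :
    pdLE R m A := by
  cases m with
  | zero =>
    have h : Module.Projective R (A × Q) := hAQ
    exact Module.Projective.of_split (LinearMap.inl R A Q) (LinearMap.fst R A Q)
      (LinearMap.ext fun x => rfl)
  | succ m =>
    obtain ⟨P, _, _, f, hf, hP, hker⟩ := hAQ
    refine ⟨P, ‹_›, ‹_›, (LinearMap.fst R A Q) ∘ₗ f, ?_, hP, ?_⟩
    · exact Prod.fst_surjective.comp hf
    set f₁ := (LinearMap.fst R A Q) ∘ₗ f with hf₁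
    let π : LinearMap.ker f₁ →ₗ[R] Q := (LinearMap.snd R A Q) ∘ₗ f ∘ₗ (LinearMap.ker f₁).subtype
    have hπs : Function.Surjective π := by
      intro q
      obtain ⟨x, hx⟩ := hf (0, q)
      refine ⟨⟨x, ?_⟩, ?_⟩
      · simp [hf₁, LinearMap.mem_ker, hx]
      · simp [π, hx]
    obtain ⟨s, hs⟩ := Module.projective_lifting_property (R := R) π LinearMap.id hπs
    have hs' : ∀ q, π (s q) = q := fun q => congrFun (congrArg (fun t => t.toFun) hs) q
    have e1 : (LinearMap.ker π × Q) ≃ₗ[R] LinearMap.ker f₁ := splitEquiv π s hs'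
    have e2 : LinearMap.ker f ≃ₗ[R] LinearMap.ker π :=
      { toFun := fun k => ⟨⟨k.val, by
          have := k.property
          simp only [LinearMap.mem_ker] at this
          simp [hf₁, LinearMap.mem_ker, this]⟩, by
          have := k.property
          simp only [LinearMap.mem_ker] at this
          simp [π, LinearMap.mem_ker, this]⟩
        map_add' := fun a b => rfl
        map_smul' := fun r a => rfl
        invFun := fun z => ⟨z.val.val, by
          have h1 : f₁ z.val.val = 0 := z.val.property
          have h2 : π z = 0 := z.property
          simp only [hf₁, LinearMap.comp_apply, LinearMap.fst_apply] at h1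
          simp only [π, LinearMap.comp_apply, LinearMap.snd_apply, Submodule.coe_subtype] at h2
          rw [LinearMap.mem_ker]
          exact Prod.ext h1 h2⟩
        left_inv := fun k => rfl
        right_inv := fun z => rfl }
    refine pdLE_of_equiv m _ _ e1 ?_
    exact pdLE_prod m _ _ (pdLE_of_equiv m _ _ e2 hker) hQ

theorem pdLE_step {m : ℕ} (hM : pdLE R (m+1) M) (f : P →ₗ[R] M)
    (hf : Function.Surjective f) (hP : Module.Projective R P) :
    pdLE R m (LinearMap.ker f) := by
  obtain ⟨Q, _, _, g, hg, hQ, hker⟩ := hM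
  obtain ⟨e⟩ := schanuel f g hf hg hP hQ
  exact pdLE_of_prod (pdLE_of_equiv m _ _ e.symm (pdLE_prod m _ _ hker hP)) hQ
end PD2
section PD3
variable {R : Type u} [Ring R]

theorem subsingleton_of_isZero {N : ModuleCat.{u} R} (h : IsZero N) : Subsingleton N := by
  constructor
  intro a b
  have h1 : (𝟙 N : N ⟶ N) = 0 := h.eq_of_src _ _
  calc a = (𝟙 N : N ⟶ N) a := rfl
    _ = (0 : N ⟶ N) a := by rw [h1]
    _ = (𝟙 N : N ⟶ N) b := by rw [h1]; rfl
    _ = b := rfl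

theorem moduleProjective_of_projective (N : ModuleCat.{u} R) [Projective N] :
    Module.Projective R N :=
  (IsProjective.iff_projective.{u,u} (R := R) N).mpr ‹_›

theorem pdLE_cyc (K : ChainComplex (ModuleCat.{u} R) ℕ)
    (hproj : ∀ j, Projective (K.X j))
    (hex : ∀ j : ℕ, (ShortComplex.mk _ _ (K.d_comp_d (j + 2) (j + 1) j)).Exact) :
    ∀ (m j : ℕ), (∀ k, j + m < k → IsZero (K.X k)) →
      pdLE R m (LinearMap.ker ((K.d (j+1) j).hom : K.X (j+1) →ₗ[R] K.X j)) := by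
  intro m
  induction m with
  | zero =>
    intro j hvan
    have : Subsingleton (K.X (j+1)) := subsingleton_of_isZero (hvan (j+1) (by omega))
    show Module.Projective R _
    exact Module.projective_of_subsingleton _
  | succ m ih =>
    intro j hvan
    have hdd : ∀ x : K.X (j+2), (K.d (j+1) j) ((K.d (j+2) (j+1)) x) = 0 := by
      intro x
      have := K.d_comp_d (j+2) (j+1) j
      calc (K.d (j+1) j) ((K.d (j+2) (j+1)) x) = (K.d (j+2) (j+1) ≫ K.d (j+1) j) x := rfl
        _ = (0 : K.X (j+2) ⟶ K.X j) x := by rw [this]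
        _ = 0 := rfl
    let g : K.X (j+2) →ₗ[R] LinearMap.ker ((K.d (j+1) j).hom : K.X (j+1) →ₗ[R] K.X j) :=
      LinearMap.codRestrict _ (K.d (j+2) (j+1)).hom (fun x => LinearMap.mem_ker.2 (hdd x))
    have hgs : Function.Surjective g := by
      intro z
      obtain ⟨y, hy⟩ := (ShortComplex.moduleCat_exact_iff _).1 (hex j) z.val z.property
      exact ⟨y, Subtype.ext hy⟩
    refine ⟨K.X (j+2), inferInstance, inferInstance, g, hgs,
      by haveI := hproj (j+2); exact moduleProjective_of_projective _, ?_⟩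
    refine pdLE_congr (LinearMap.ker_codRestrict _ _ _).symm ?_
    exact ih (j+1) (fun k hk => hvan k (by omega))

theorem pdLE_global (n : ℕ)
    (h : ∀ M : ModuleCat.{u} R, ∃ P : ProjectiveResolution M,
      ∀ k : ℕ, n < k → IsZero (P.complex.X k))
    (M : Type u) [AddCommGroup M] [Module R M] : pdLE R (n+2) M := by
  obtain ⟨P, hvan⟩ := h (ModuleCat.of R M)
  set K := P.complex with hK
  have hex0 := P.exact₀
  let ε : K.X 0 →ₗ[R] M := (P.π.f 0).hom
  have hεs : Function.Surjective ε := by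
    have : Epi (P.π.f 0) := inferInstance
    exact (ModuleCat.epi_iff_surjective (P.π.f 0)).1 this
  refine ⟨K.X 0, inferInstance, inferInstance, ε, hεs,
    by haveI := P.projective 0; exact moduleProjective_of_projective _, ?_⟩
  have hdε : ∀ x : K.X 1, ε ((K.d 1 0) x) = 0 := by
    intro x
    have := P.complex_d_comp_π_f_zero
    calc ε ((K.d 1 0) x) = (id ((K.d 1 0 ≫ P.π.f 0) x) : M) := rfl
      _ = (id ((0 : K.X 1 ⟶ ModuleCat.of R M) x) : M) := by rw [this]; rfl
      _ = 0 := rfl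
  let g0 : K.X 1 →ₗ[R] LinearMap.ker ε :=
    LinearMap.codRestrict _ (K.d 1 0).hom (fun x => LinearMap.mem_ker.2 (hdε x))
  have hg0s : Function.Surjective g0 := by
    intro z
    obtain ⟨y, hy⟩ := (ShortComplex.moduleCat_exact_iff _).1 hex0 z.val z.property
    exact ⟨y, Subtype.ext hy⟩
  refine ⟨K.X 1, inferInstance, inferInstance, g0, hg0s,
    by haveI := P.projective 1; exact moduleProjective_of_projective _, ?_⟩
  refine pdLE_congr (LinearMap.ker_codRestrict _ _ _).symm ?_
  exact pdLE_cyc K (fun j => P.projective j) (fun j => P.exact_succ j) n 0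
    (fun k hk => hvan k (by omega))
end PD3

/-- Over a ring `R` of finite left global dimension (every left `R`-module admits a
projective resolution of length bounded by a uniform `n`), every acyclic ℤ-graded chain
complex of projective left `R`-modules is contractible, i.e. its identity map is chain
homotopic to zero. -/
theorem stmt_10 (R : Type u) [Ring R]
    (hglob : ∃ n : ℕ, ∀ M : ModuleCat.{u} R, ∃ P : ProjectiveResolution M,
      ∀ k : ℕ, n < k → IsZero (P.complex.X k))
    (C : HomologicalComplex (ModuleCat.{u} R) (ComplexShape.down ℤ))
    (hproj : ∀ k : ℤ, Projective (C.X k))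
    (hacyclic : ∀ k : ℤ, C.ExactAt k) :
    Nonempty (Homotopy (𝟙 C) 0) := by
  classical
  obtain ⟨n, hres⟩ := hglob
  -- cycles
  let Z : ∀ k : ℤ, Submodule R (C.X k) :=
    fun k => LinearMap.ker ((C.d k (k-1)).hom : C.X k →ₗ[R] C.X (k-1))
  have hdd : ∀ (i j l : ℤ) (x : C.X i), (C.d j l) ((C.d i j) x) = 0 := by
    intro i j l x
    have h := C.d_comp_d i j l
    calc (C.d j l) ((C.d i j) x) = (C.d i j ≫ C.d j l) x := rfl
      _ = (0 : C.X i ⟶ C.X l) x := by rw [h]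
      _ = 0 := rfl
  -- exactness in elementwise form
  have ex : ∀ (j : ℤ) (x : C.X j), C.d j (j-1) x = 0 →
      ∃ y : C.X (j+1), C.d (j+1) j y = x := by
    intro j x hx
    have h1 : (ComplexShape.down ℤ).prev j = j + 1 :=
      (ComplexShape.down ℤ).prev_eq' (by simp)
    have h2 : (ComplexShape.down ℤ).next j = j - 1 :=
      (ComplexShape.down ℤ).next_eq' (by simp)
    have hE := (HomologicalComplex.exactAt_iff' C (j+1) j (j-1) h1 h2).1 (hacyclic j)
    exact (ShortComplex.moduleCat_exact_iff _).1 hE x hx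
  -- the corestricted differentials onto cycles
  let D : ∀ k : ℤ, (C.X (k+1) →ₗ[R] Z k) :=
    fun k => LinearMap.codRestrict _ ((C.d (k+1) k).hom : C.X (k+1) →ₗ[R] C.X k)
      (fun x => LinearMap.mem_ker.2 (hdd (k+1) k (k-1) x))
  have hDs : ∀ k : ℤ, Function.Surjective (D k) := by
    intro k z
    obtain ⟨y, hy⟩ := ex k z.val z.property
    exact ⟨y, Subtype.ext hy⟩
  -- all modules have pd ≤ n+2
  have pdAll : ∀ (M : Type u) [AddCommGroup M] [Module R M], pdLE R (n+2) M :=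
    fun M _ _ => pdLE_global n hres M
  -- projectivity of all cycle modules
  have projX : ∀ k : ℤ, Module.Projective R (C.X k) := by
    intro k; haveI := hproj k; exact moduleProjective_of_projective _
  have step : ∀ (m : ℕ) (k : ℤ), pdLE R m (Z k) → Module.Projective R (Z (k + m)) := by
    intro m
    induction m with
    | zero =>
      intro k h
      rw [show (k + ((0:ℕ):ℤ)) = k by simp]
      exact h
    | succ m ih =>
      intro k h
      have hpd := pdLE_step h (D k) (hDs k) (projX (k+1))
      have hker : LinearMap.ker (D k) = Z (k+1) := by
        rw [LinearMap.ker_codRestrict]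
        show _ = LinearMap.ker ((C.d (k+1) (k+1-1)).hom : C.X (k+1) →ₗ[R] C.X (k+1-1))
        rw [show (k+1-1 : ℤ) = k by omega]
      rw [show (k + ((m+1 : ℕ):ℤ)) = (k + 1) + (m : ℕ) by push_cast; ring]
      exact ih (k+1) (pdLE_congr hker hpd)
  have projZ : ∀ k : ℤ, Module.Projective R (Z k) := by
    intro k
    have h := step (n+2) (k - ((n+2 : ℕ) : ℤ)) (pdAll _)
    rw [show (k - ((n+2 : ℕ) : ℤ) + ((n+2 : ℕ) : ℤ)) = k by omega] at h
    exact h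
  -- sections of the corestricted differentials
  have secS : ∀ (i j : ℤ), i + 1 = j →
      ∃ s : Z i →ₗ[R] C.X j, ∀ z : Z i, (C.d j i) (s z) = z.val := by
    intro i j hj
    subst hj
    haveI := projZ i
    obtain ⟨s, hs⟩ := Module.projective_lifting_property (D i) LinearMap.id (hDs i)
    refine ⟨s, fun z => ?_⟩
    have h1 : D i (s z) = z := DFunLike.congr_fun hs z
    calc (C.d (i+1) i) (s z) = (D i (s z)).val := rfl
      _ = z.val := by rw [h1]
  choose S hS using secS
  -- the maps δ and q
  let δ : ∀ k : ℤ, (C.X k →ₗ[R] Z (k-1)) :=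
    fun k => LinearMap.codRestrict _ ((C.d k (k-1)).hom : C.X k →ₗ[R] C.X (k-1))
      (fun x => LinearMap.mem_ker.2 (hdd k (k-1) (k-1-1) x))
  have memq : ∀ (k : ℤ) (x : C.X k),
      ((LinearMap.id : C.X k →ₗ[R] C.X k) - (S (k-1) k (by omega)) ∘ₗ (δ k)) x ∈ Z k := by
    intro k x
    show (C.d k (k-1)) (x - S (k-1) k (by omega) ((δ k) x)) = 0
    rw [map_sub, hS (k-1) k (by omega) ((δ k) x)]
    show C.d k (k-1) x - C.d k (k-1) x = 0
    simp
  let q : ∀ k : ℤ, (C.X k →ₗ[R] Z k) :=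
    fun k => LinearMap.codRestrict _ _ (memq k)
  refine ⟨{
    hom := fun i j =>
      if h : i + 1 = j then ModuleCat.ofHom (S i j h ∘ₗ q i : C.X i →ₗ[R] C.X j) else 0
    zero := fun i j hrel => dif_neg hrel
    comm := fun j => ?_ }⟩
  have relj : (ComplexShape.down ℤ).Rel j (j-1) := by simp
  have relj' : (ComplexShape.down ℤ).Rel (j+1) j := by simp
  rw [dNext_eq _ relj, prevD_eq _ relj']
  rw [dif_pos (show (j-1) + 1 = j by omega), dif_pos (show j + 1 = j + 1 from rfl)]
  ext x
  have hB : C.d (j+1) j ((S j (j+1) rfl) (q j x)) = x - S (j-1) j (by omega) ((δ j) x) := by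
    rw [hS j (j+1) rfl (q j x)]
    rfl
  have hq : q (j-1) (C.d j (j-1) x) = (δ j) x := by
    apply Subtype.ext
    show C.d j (j-1) x - S (j-1-1) (j-1) (by omega) ((δ (j-1)) (C.d j (j-1) x)) = _
    have hδ0 : (δ (j-1)) (C.d j (j-1) x) = 0 := by
      apply Subtype.ext
      show C.d (j-1) (j-1-1) (C.d j (j-1) x) = 0
      exact hdd j (j-1) (j-1-1) x
    rw [hδ0, map_zero, sub_zero]
    rfl
  calc ((𝟙 C : C ⟶ C).f j) x = x := rfl
    _ = (S (j-1) j (show (j-1)+1 = j by omega)) (q (j-1) (C.d j (j-1) x))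
        + (C.d (j+1) j) ((S j (j+1) rfl) (q j x)) + ((0 : C ⟶ C).f j) x := by
        rw [hB, hq, HomologicalComplex.zero_f]
        show x = S (j-1) j _ ((δ j) x) + (x - S (j-1) j _ ((δ j) x)) + 0
        abel
    _ = _ := rfl
end

section
/- Let X be a topological space and let B be the quotient of (0,1] × X by the equivalence relation (r, x) ∼ (r′, x′) iff r = r′ and (r < 1 or x = x′). Then the blow-down map B → (0,1] induced by the first projection is a homotopy equivalence. -/
/-- The non-Hausdorff boundary blow-up of `(0,1]` along `X`: the quotient of `(0,1] × X`
identifying `(r, x) ∼ (r', x')` iff `r = r'` and (`r < 1` or `x = x'`). -/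
def BlowRel (X : Type*) :
    (Set.Ioc (0 : ℝ) 1 × X) → (Set.Ioc (0 : ℝ) 1 × X) → Prop :=
  fun p q => p.1 = q.1 ∧ ((p.1 : ℝ) < 1 ∨ p.2 = q.2)

def Blow (X : Type*) : Type _ := Quot (BlowRel X)

instance (X : Type*) [TopologicalSpace X] : TopologicalSpace (Blow X) :=
  TopologicalSpace.coinduced (Quot.mk (BlowRel X)) inferInstance

open unitInterval in
/-- the scaling `r ↦ r * (1 - t/2)` inside `(0,1]`. -/
noncomputable def blowSigma (t : I) (r : Set.Ioc (0 : ℝ) 1) : Set.Ioc (0 : ℝ) 1 :=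
  ⟨(r : ℝ) * (1 - (t : ℝ) / 2), by
    have ht0 := t.2.1; have ht1 := t.2.2
    have hr0 := r.2.1; have hr1 := r.2.2
    constructor <;> nlinarith⟩

open unitInterval

lemma blowSigma_zero (r : Set.Ioc (0 : ℝ) 1) : blowSigma 0 r = r := by
  ext; simp [blowSigma]

lemma blowSigma_lt_one (t : I) (r : Set.Ioc (0 : ℝ) 1) (hr : (r : ℝ) < 1) :
    (blowSigma t r : ℝ) < 1 := by
  have ht0 := t.2.1; have ht1 := t.2.2
  have hr0 := r.2.1
  have : (r : ℝ) * ((t : ℝ) / 2) ≥ 0 := by positivity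
  simp only [blowSigma]
  nlinarith

lemma blowSigma_one_lt_one (r : Set.Ioc (0 : ℝ) 1) : (blowSigma 1 r : ℝ) < 1 := by
  have hr0 := r.2.1; have hr1 := r.2.2
  simp only [blowSigma]
  norm_num
  nlinarith

lemma blowSigma_cont : Continuous fun p : I × Set.Ioc (0 : ℝ) 1 => blowSigma p.1 p.2 := by
  apply Continuous.subtype_mk
  fun_prop

lemma continuous_blowMk (X : Type*) [TopologicalSpace X] :
    Continuous (Quot.mk (BlowRel X)) := continuous_coinduced_rng

lemma isQuotientMap_blowMk (X : Type*) [TopologicalSpace X] :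
    Topology.IsQuotientMap (Quot.mk (BlowRel X)) :=
  ⟨⟨rfl⟩, Quot.exists_rep⟩

/-- The blow-down map `Blow X → (0,1]` induced by the first projection is a homotopy
equivalence. -/
theorem stmt_13 (X : Type*) [TopologicalSpace X] [Nonempty X]
    (down : C(Blow X, Set.Ioc (0 : ℝ) 1))
    (hdown : ∀ p : Set.Ioc (0 : ℝ) 1 × X, down (Quot.mk (BlowRel X) p) = p.1) :
    ∃ g : C(Set.Ioc (0 : ℝ) 1, Blow X),
      (down.comp g).Homotopic (ContinuousMap.id _) ∧
      (g.comp down).Homotopic (ContinuousMap.id _) := by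
  obtain ⟨x₀⟩ := ‹Nonempty X›
  set g : C(Set.Ioc (0 : ℝ) 1, Blow X) :=
    ⟨fun r => Quot.mk (BlowRel X) (r, x₀),
      (continuous_blowMk X).comp (continuous_id.prodMk continuous_const)⟩ with hg
  refine ⟨g, ?_, ?_⟩
  · have : down.comp g = ContinuousMap.id _ := by
      ext r
      exact congrArg Subtype.val (hdown (r, x₀))
    rw [this]
  · -- k' : b ↦ [σ 1 (down b), x₀]
    set k' : C(Blow X, Blow X) :=
      ⟨fun b => Quot.mk (BlowRel X) (blowSigma 1 (down b), x₀),
        (continuous_blowMk X).comp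
          ((blowSigma_cont.comp (continuous_const.prodMk down.continuous)).prodMk
            continuous_const)⟩ with hk'
    have H1 : (g.comp down).Homotopic k' := by
      refine ⟨⟨⟨fun p => Quot.mk (BlowRel X) (blowSigma p.1 (down p.2), x₀), ?_⟩, ?_, ?_⟩⟩
      · exact (continuous_blowMk X).comp
          ((blowSigma_cont.comp
            (continuous_fst.prodMk (down.continuous.comp continuous_snd))).prodMk
            continuous_const)
      · intro b
        simp only [ContinuousMap.coe_mk, ContinuousMap.comp_apply]
        rw [blowSigma_zero]
        rfl
      · intro b; rfl
    have H2 : (ContinuousMap.id (Blow X)).Homotopic k' := by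
      refine ⟨⟨⟨fun p => Quot.lift
          (fun q : Set.Ioc (0:ℝ) 1 × X => Quot.mk (BlowRel X) (blowSigma p.1 q.1, q.2))
          ?_ p.2, ?_⟩, ?_, ?_⟩⟩
      · rintro ⟨a1, a2⟩ ⟨b1, b2⟩ ⟨h1, h2⟩
        dsimp only at h1 h2
        rcases h2 with h2 | h2
        · apply Quot.sound
          exact ⟨by rw [h1], Or.inl (blowSigma_lt_one _ _ h2)⟩
        · subst h1; subst h2; rfl
      · apply (isQuotientMap_blowMk X).continuous_lift_prod_right
        exact (continuous_blowMk X).comp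
          ((blowSigma_cont.comp
            (continuous_fst.prodMk (continuous_fst.comp continuous_snd))).prodMk
            (continuous_snd.comp continuous_snd))
      · intro b
        induction b using Quot.ind with
        | _ q =>
          simp only [ContinuousMap.coe_mk]
          rw [blowSigma_zero]
          rfl
      · intro b
        induction b using Quot.ind with
        | _ q =>
          simp only [ContinuousMap.coe_mk, hk', ContinuousMap.coe_mk]
          show Quot.mk (BlowRel X) (blowSigma 1 q.1, q.2) = Quot.mk (BlowRel X) (blowSigma 1 (down (Quot.mk (BlowRel X) q)), x₀)
          rw [hdown q]
          exact Quot.sound ⟨rfl, Or.inl (blowSigma_one_lt_one _)⟩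
    exact H1.trans H2.symm
end
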